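/- Let A and B be max-plus automata over the same finite alphabet Σ with A deterministic, and let w be a word with f_A(w) ≠ −∞ and f_B(w) ≠ −∞. Then every node of any factorisation tree on w has a non-empty set of contributors. -/

import Mathlib

open scoped Classical

/-! ### Max-plus automata -/

/-- A max-plus automaton over alphabet `Sigma` with states `Q`:
a transition matrix for each letter, an initial row vector and a final column vector,
all with entries in `ℕmax = ℕ ∪ {-∞}`, represented as `WithBot ℕ`. -/
structure MPA (Sigma : Type) (Q : Type) where
  M : Sigma → Q → Q → WithBot ℕ
  I : Q → WithBot ℕ
  F : Q → WithBot ℕ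

namespace MPA

variable {Sigma Q : Type}

/-- The matrix of a word, i.e. the product `M(w₁) ⊗ ⋯ ⊗ M(w_k)` over the
max-plus semiring. -/
def mword [Fintype Q] [DecidableEq Q] (A : MPA Sigma Q) : List Sigma → Q → Q → WithBot ℕ
  | [] => fun p q => if p = q then ((0 : ℕ) : WithBot ℕ) else ⊥
  | a :: w => fun p q => Finset.univ.sup fun r => A.M a p r + A.mword w r q

/-- The weighting function computed by a max-plus automaton:
`f_A(w) = I ⊗ M(w) ⊗ F`. -/
def func [Fintype Q] [DecidableEq Q] (A : MPA Sigma Q) (w : List Sigma) : WithBot ℕ :=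
  Finset.univ.sup fun p => Finset.univ.sup fun q => A.I p + A.mword w p q + A.F q

/-- `A` is deterministic: at most one non-`-∞` entry in `I`,
and at most one non-`-∞` entry in each row of each `M(a)`. -/
def Deterministic (A : MPA Sigma Q) : Prop :=
  (∀ p q, A.I p ≠ ⊥ → A.I q ≠ ⊥ → p = q) ∧
    ∀ a p q r, A.M a p q ≠ ⊥ → A.M a p r ≠ ⊥ → q = r

end MPA

/-- `A` is big-O of `B`: there is `c ≥ 1` with `f_A(w) ≤ c·f_B(w) + c` for all `w`. -/
def BigO {Sigma Q1 Q2 : Type} [Fintype Q1] [DecidableEq Q1] [Fintype Q2] [DecidableEq Q2]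
    (A : MPA Sigma Q1) (B : MPA Sigma Q2) : Prop :=
  ∃ c : ℕ, 1 ≤ c ∧ ∀ w : List Sigma, A.func w ≤ c • B.func w + (c : WithBot ℕ)

/-! ### The semiring Ω = {-∞, 0, 1, ∞} -/

/-- The four-element semiring `Ω = ({-∞,0,1,∞}, max, +)`. -/
inductive OSR : Type
  | bot | zero | one | inf
  deriving DecidableEq

namespace OSR

def rank : OSR → ℕ
  | bot => 0 | zero => 1 | one => 2 | inf => 3

instance : LE OSR := ⟨fun a b => a.rank ≤ b.rank⟩
instance : LT OSR := ⟨fun a b => a.rank < b.rank⟩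

/-- The max operation of `Ω`, given by the order `-∞ < 0 < 1 < ∞`. -/
def sup (a b : OSR) : OSR := if a.rank ≤ b.rank then b else a

/-- The sum operation of `Ω`. -/
def add : OSR → OSR → OSR
  | bot, _ => bot
  | _, bot => bot
  | zero, x => x
  | x, zero => x
  | one, one => one
  | one, inf => inf
  | inf, one => inf
  | inf, inf => inf

/-- Stabilisation on `Ω`. -/
def sharp : OSR → OSR
  | bot => bot | zero => zero | one => inf | inf => inf

/-- Projection into `Ω̄ = {-∞,0,1}`. -/
def bar : OSR → OSR
  | bot => bot | zero => zero | one => one | inf => one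

end OSR

/-- Max of a finite family in `Ω`. -/
def osum {n : ℕ} (f : Fin n → OSR) : OSR :=
  (List.finRange n).foldr (fun j acc => OSR.sup (f j) acc) OSR.bot

/-- Product of matrices over `Ω`. -/
def omul {n : ℕ} (M N : Fin n → Fin n → OSR) : Fin n → Fin n → OSR :=
  fun i k => osum fun j => OSR.add (M i j) (N j k)

/-- Entrywise projection of a matrix into `Ω̄`. -/
def obar {n : ℕ} (M : Fin n → Fin n → OSR) : Fin n → Fin n → OSR :=
  fun i j => (M i j).bar

/-- Projection of `ℕmax` into `Ω̄ ⊆ Ω`: `-∞ ↦ -∞`, `0 ↦ 0`, positive ↦ `1`. -/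
def barW (x : WithBot ℕ) : OSR :=
  WithBot.recBotCoe OSR.bot (fun n => if n = 0 then OSR.zero else OSR.one) x

/-- Projection of `ℕ` into `Ω̄`. -/
def barNat (n : ℕ) : OSR := if n = 0 then OSR.zero else OSR.one

/-! ### The semigroups `I_{Q,i}` and their operations -/

/-- A (non-`⊥`) element `(p, x, q, M)` of the semigroup `I_{Q,n}`. -/
structure Elem (QA : Type) (n : ℕ) where
  p : QA
  x : OSR
  q : QA
  M : Fin n → Fin n → OSR

/-- Product of two elements (assuming endpoint compatibility). -/
def eprod {QA : Type} {n : ℕ} (e f : Elem QA n) : Elem QA n :=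
  ⟨e.p, e.x.add f.x, f.q, omul e.M f.M⟩

/-- The product in `I_{Q,n}` with `⊥` (`none` is `⊥`). -/
def omulO {QA : Type} {n : ℕ} [DecidableEq QA] :
    Option (Elem QA n) → Option (Elem QA n) → Option (Elem QA n)
  | some e, some f => if e.q = f.p then some (eprod e f) else none
  | _, _ => none

/-- `(p,x,q,M)` is path-idempotent: `p = q` and `bar(M)` is idempotent. -/
def pathIdem {QA : Type} {n : ℕ} (e : Elem QA n) : Prop :=
  e.p = e.q ∧ omul (obar e.M) (obar e.M) = obar e.M

/-- `M` with all diagonal entries replaced by their stabilisation. -/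
def mdiagSharp {n : ℕ} (M : Fin n → Fin n → OSR) : Fin n → Fin n → OSR :=
  fun i j => if i = j then (M i j).sharp else M i j

/-- Stabilisation of a (path-idempotent) matrix: `M^# = M ⊗ M' ⊗ M`. -/
def mstab {n : ℕ} (M : Fin n → Fin n → OSR) : Fin n → Fin n → OSR :=
  omul (omul M (mdiagSharp M)) M

/-- Stabilisation of a (path-idempotent) element. -/
def estab {QA : Type} {n : ℕ} (e : Elem QA n) : Elem QA n :=
  ⟨e.p, e.x.sharp, e.p, mstab e.M⟩

/-- `⟨N⟩`: all off-diagonal entries replaced by their bar. -/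
def mangle {n : ℕ} (M : Fin n → Fin n → OSR) : Fin n → Fin n → OSR :=
  fun i j => if i = j then M i j else (M i j).bar

/-- Flattening of a (path-idempotent) matrix: `M^♭ = bar(M) ⊗ ⟨M³⟩ ⊗ bar(M)`. -/
def mflat {n : ℕ} (M : Fin n → Fin n → OSR) : Fin n → Fin n → OSR :=
  omul (obar M) (omul (mangle (omul M (omul M M))) (obar M))

/-- Flattening of a (path-idempotent) element. -/
def eflat {QA : Type} {n : ℕ} (e : Elem QA n) : Elem QA n :=
  ⟨e.p, e.x, e.p, mflat e.M⟩

/-- Componentwise projection of an element to `Ω̄`. -/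
def ebar {QA : Type} {n : ℕ} (e : Elem QA n) : Elem QA n :=
  ⟨e.p, e.x.bar, e.q, obar e.M⟩

/-! ### Semigroup of paths and of asymptotic behaviours -/

/-- Generators: `(p, bar x, q, bar (M_B(a)))` for each transition `p →^{a:x} q` of `A`
with `x ≠ -∞`. -/
def IsGen {Sigma QA : Type} {nB : ℕ} (A : MPA Sigma QA) (B : MPA Sigma (Fin nB))
    (e : Elem QA nB) : Prop :=
  ∃ (a : Sigma) (p q : QA) (x : ℕ), A.M a p q = ((x : ℕ) : WithBot ℕ) ∧
    e = ⟨p, barNat x, q, fun i j => barW (B.M a i j)⟩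

/-- The semigroup of paths `S̄_{A,B}` (as a subset of `Ī_{Q_A,|Q_B|}`, including `⊥`):
generated by the generators under the product. -/
inductive InPathsO {Sigma QA : Type} {nB : ℕ} [DecidableEq QA]
    (A : MPA Sigma QA) (B : MPA Sigma (Fin nB)) : Option (Elem QA nB) → Prop
  | gen : ∀ e, IsGen A B e → InPathsO A B (some e)
  | mul : ∀ x y, InPathsO A B x → InPathsO A B y → InPathsO A B (omulO x y)

/-- The semigroup of asymptotic behaviours `I_{A,B}`: generated by the generators and
closed under product, stabilisation and flattening. -/
inductive InAsympO {Sigma QA : Type} {nB : ℕ} [DecidableEq QA]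
    (A : MPA Sigma QA) (B : MPA Sigma (Fin nB)) : Option (Elem QA nB) → Prop
  | gen : ∀ e, IsGen A B e → InAsympO A B (some e)
  | mul : ∀ x y, InAsympO A B x → InAsympO A B y → InAsympO A B (omulO x y)
  | stab : ∀ e, InAsympO A B (some e) → pathIdem e → InAsympO A B (some (estab e))
  | flat : ∀ e, InAsympO A B (some e) → pathIdem e → InAsympO A B (some (eflat e))

/-- The cardinality `|S̄_{A,B}|` of the semigroup of paths. -/
noncomputable def sizeS {Sigma QA : Type} {nB : ℕ} [DecidableEq QA]
    (A : MPA Sigma QA) (B : MPA Sigma (Fin nB)) : ℕ :=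
  Set.ncard {x : Option (Elem QA nB) | InPathsO A B x}

/-- `(p,x,q,M)` is a witness of non-domination: `p` initial in `A`, `q` final in `A`,
`x = ∞` and `bar(I_B) ⊗ M ⊗ bar(F_B) < ∞`. -/
def IsWitness {Sigma QA : Type} {nB : ℕ} (A : MPA Sigma QA) (B : MPA Sigma (Fin nB))
    (e : Elem QA nB) : Prop :=
  A.I e.p ≠ ⊥ ∧ A.F e.q ≠ ⊥ ∧ e.x = OSR.inf ∧
    osum (fun i => osum fun j =>
      OSR.add (barW (B.I i)) (OSR.add (e.M i j) (barW (B.F j)))) ≠ OSR.inf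

/-! ### Tractable witnesses -/

/-- Membership of an extended element (`none` is the adjoined identity `𝟙`) in `S̄_{A,B}`. -/
def InPathsOpt {Sigma QA : Type} {nB : ℕ} [DecidableEq QA]
    (A : MPA Sigma QA) (B : MPA Sigma (Fin nB)) : Option (Elem QA nB) → Prop
  | none => True
  | some e => InPathsO A B (some e)

/-- `g ⊗ e ⊗ g'` where `g, g'` may be the adjoined identity `𝟙` (i.e. `none`). -/
def extWrap {QA : Type} {n : ℕ} (g : Option (Elem QA n)) (e : Elem QA n)
    (g' : Option (Elem QA n)) : Elem QA n :=
  match g, g' with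
  | none, none => e
  | some a, none => eprod a e
  | none, some b => eprod e b
  | some a, some b => eprod a (eprod e b)

/-- `TractCore A B k e`: `e` has the form
`(g_1 (⋯ (g_{k-1} (g_k)^# g'_{k-1})^♭ ⋯)^♭ g'_1)^♭` with `k` flattenings, built from
elements of `S̄_{A,B} ∪ {𝟙}`. -/
inductive TractCore {Sigma QA : Type} {nB : ℕ} [DecidableEq QA]
    (A : MPA Sigma QA) (B : MPA Sigma (Fin nB)) : ℕ → Elem QA nB → Prop
  | base : ∀ e, InPathsO A B (some e) → pathIdem e → TractCore A B 0 (estab e)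
  | step : ∀ k e g g', TractCore A B k e →
      InPathsOpt A B g → InPathsOpt A B g' →
      (∀ a, g = some a → a.q = e.p) → (∀ b, g' = some b → e.q = b.p) →
      pathIdem (extWrap g e g') →
      TractCore A B (k + 1) (eflat (extWrap g e g'))

/-- A tractable witness of non-domination. -/
def IsTractableWitness {Sigma QA : Type} {nB : ℕ} [DecidableEq QA]
    (A : MPA Sigma QA) (B : MPA Sigma (Fin nB)) (wit : Elem QA nB) : Prop :=
  IsWitness A B wit ∧
    ∃ (m : ℕ) (e : Elem QA nB) (g g' : Option (Elem QA nB)),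
      m + 1 ≤ 3 * sizeS A B ∧
      TractCore A B m e ∧ InPathsOpt A B g ∧ InPathsOpt A B g' ∧
      (∀ a, g = some a → a.q = e.p) ∧ (∀ b, g' = some b → e.q = b.p) ∧
      wit = extWrap g e g'

/-! ### Factorisation trees -/

/-- Finite ordered trees labelled by elements of `Ī_{Q_A,|Q_B|}`. -/
inductive FT (QA : Type) (n : ℕ) : Type
  | leaf : Elem QA n → FT QA n
  | node : Elem QA n → List (FT QA n) → FT QA n

namespace FT

variable {QA : Type} {n : ℕ}

/-- The label of the root of a tree. -/
def label : FT QA n → Elem QA n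
  | leaf e => e
  | node e _ => e

mutual
  /-- The list of leaf labels of a tree, in order. -/
  def leaves : FT QA n → List (Elem QA n)
    | .leaf e => [e]
    | .node _ cs => leavesList cs
  def leavesList : List (FT QA n) → List (Elem QA n)
    | [] => []
    | t :: ts => leaves t ++ leavesList ts
end

mutual
  /-- Height of a tree: leaves have height `0`. -/
  def height : FT QA n → ℕ
    | .leaf _ => 0
    | .node _ cs => heightList cs + 1
  def heightList : List (FT QA n) → ℕ
    | [] => 0
    | t :: ts => max (height t) (heightList ts)
end

/-- The `i`-th child. -/
def childAt : FT QA n → ℕ → Option (FT QA n)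
  | leaf _, _ => none
  | node _ cs, i => cs[i]?

/-- The subtree at a path (a list of child indices from the root). -/
def subtreeAt : FT QA n → List ℕ → Option (FT QA n)
  | t, [] => some t
  | t, i :: rest => (t.childAt i).bind fun c => subtreeAt c rest

/-- Well-formed factorisation trees: internal nodes have ≥ 2 children, are labelled by the
product of the children's labels (with compatible endpoints), and nodes with ≥ 3 children
are idempotent nodes: all children and the node itself carry one same idempotent label. -/
inductive WF : FT QA n → Prop
  | leaf : ∀ e, WF (FT.leaf e)
  | node : ∀ (lbl : Elem QA n) (cs : List (FT QA n)),
      2 ≤ cs.length →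
      (∀ c ∈ cs, WF c) →
      List.Chain' (fun a b => a.q = b.p) (cs.map FT.label) →
      (∀ h t, cs.map FT.label = h :: t → lbl = t.foldl eprod h) →
      (3 ≤ cs.length → lbl.p = lbl.q ∧ eprod lbl lbl = lbl ∧ ∀ c ∈ cs, FT.label c = lbl) →
      WF (FT.node lbl cs)

end FT

/-- One top-down step of the computation of contributors: from the contributor set `C` of a
node with children `cs`, the contributor set of the `i`-th child. -/
def contribStep {QA : Type} {n : ℕ} (cs : List (FT QA n)) (C : Set (Fin n × Fin n)) (i : ℕ) :
    Set (Fin n × Fin n) :=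
  match cs with
  | [c1, c2] =>
      let M := (FT.label c1).M
      let P := (FT.label c2).M
      if i = 0 then
        {il | ∃ j, (il.1, j) ∈ C ∧ P il.2 j ≠ OSR.bot ∧ M il.1 il.2 ≠ OSR.bot}
      else
        {lj | ∃ a, (a, lj.2) ∈ C ∧ M a lj.1 ≠ OSR.bot ∧ P lj.1 lj.2 ≠ OSR.bot}
  | c :: _ :: _ :: _ =>
      let M := (FT.label c).M
      if i = 0 then
        {il | ∃ j, (il.1, j) ∈ C ∧ M il.2 j ≠ OSR.bot ∧ M il.1 il.2 ≠ OSR.bot}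
      else if i = cs.length - 1 then
        {lj | ∃ a, (a, lj.2) ∈ C ∧ M a lj.1 ≠ OSR.bot ∧ M lj.1 lj.2 ≠ OSR.bot}
      else
        {lk | ∃ a b, (a, b) ∈ C ∧ M a lk.1 ≠ OSR.bot ∧ M lk.2 b ≠ OSR.bot ∧
              M lk.1 lk.2 ≠ OSR.bot ∧ M lk.2 lk.1 ≠ OSR.bot}
  | _ => ∅

/-- Contributor set of the node at path `π`, starting from the set `C` at the root. -/
def contribAt {QA : Type} {n : ℕ} : FT QA n → Set (Fin n × Fin n) → List ℕ → Set (Fin n × Fin n)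
  | _, C, [] => C
  | FT.leaf _, _, _ :: _ => ∅
  | FT.node _ cs, C, i :: rest =>
      match cs[i]? with
      | none => ∅
      | some c => contribAt c (contribStep cs C i) rest

/-- The contributor set of the root: pairs `(i,j)` with `i` initial in `B`, `j` final in `B`
and `M_{i,j} ≠ -∞`. -/
def rootContrib {Sigma QA : Type} {n : ℕ} (B : MPA Sigma (Fin n)) (t : FT QA n) :
    Set (Fin n × Fin n) :=
  {ij | B.I ij.1 ≠ ⊥ ∧ B.F ij.2 ≠ ⊥ ∧ (FT.label t).M ij.1 ij.2 ≠ OSR.bot}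

/-- The contributor set of the node at path `π` of the tree `t`. -/
def contributors {Sigma QA : Type} {n : ℕ} (B : MPA Sigma (Fin n)) (t : FT QA n)
    (π : List ℕ) : Set (Fin n × Fin n) :=
  contribAt t (rootContrib B t) π

/-- `PathLeaves A B p w xs ls q`: `ls` is the list `α_w(w₁), …, α_w(w_k)` associated with the
run of `A` on `w` from `p` to `q` with transition weights `xs`. -/
def PathLeaves {Sigma QA : Type} {nB : ℕ} (A : MPA Sigma QA) (B : MPA Sigma (Fin nB)) :
    QA → List Sigma → List ℕ → List (Elem QA nB) → QA → Prop
  | p, [], [], [], q => p = q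
  | p, a :: w, x :: xs, e :: ls, q =>
      e.p = p ∧ A.M a p e.q = ((x : ℕ) : WithBot ℕ) ∧ e.x = barNat x ∧
      (e.M = fun i j => barW (B.M a i j)) ∧ PathLeaves A B e.q w xs ls q
  | _, _, _, _, _ => False

/-- `t` is a factorisation tree on the word `w` (for the accepting run of `A` on `w`). -/
def IsFactTreeOn {Sigma QA : Type} {nB : ℕ} [Fintype QA] [DecidableEq QA]
    (A : MPA Sigma QA) (B : MPA Sigma (Fin nB)) (w : List Sigma) (t : FT QA nB) : Prop :=
  FT.WF t ∧ ∃ (p q : QA) (xs : List ℕ),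
    A.I p ≠ ⊥ ∧ A.F q ≠ ⊥ ∧ PathLeaves A B p w xs (FT.leaves t) q

/-- The node of `t` at path `π` is a fault. -/
def IsFaultAt {Sigma QA : Type} {nB : ℕ} (B : MPA Sigma (Fin nB)) (t : FT QA nB)
    (π : List ℕ) : Prop :=
  ∃ σ i, π = σ ++ [i] ∧
    ∃ lbl cs, FT.subtreeAt t σ = some (FT.node lbl cs) ∧ 3 ≤ cs.length ∧
      0 < i ∧ i < cs.length - 1 ∧
      ∃ c, cs[i]? = some c ∧ (FT.label c).x = OSR.one ∧
        ∀ ij ∈ contributors B t π, (FT.label c).M ij.1 ij.2 = OSR.zero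

/-- Number of leaves strictly to the left of the node at path `π`. -/
def offsetAt {QA : Type} {n : ℕ} : FT QA n → List ℕ → ℕ
  | _, [] => 0
  | FT.leaf _, _ :: _ => 0
  | FT.node _ cs, i :: rest =>
      ((cs.take i).map fun c => (FT.leaves c).length).sum +
        match cs[i]? with
        | none => 0
        | some c => offsetAt c rest

/-- Height of the node at path `π`. -/
def heightAt {QA : Type} {n : ℕ} (t : FT QA n) (π : List ℕ) : ℕ :=
  match FT.subtreeAt t π with
  | some c => FT.height c
  | none => 0

/-- The β-labelling: `beta t π` is the β-label of the root of `t`, where `π` is the path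
from the root of `t` down to the fault `ν₁`. -/
def beta {QA : Type} {n : ℕ} : FT QA n → List ℕ → Elem QA n
  | t, [] => FT.label t
  | FT.leaf e, _ :: _ => e
  | FT.node lbl cs, i :: rest =>
      match cs[i]? with
      | none => lbl
      | some c =>
        match rest with
        | [] => estab (FT.label c)
        | j :: rest' =>
          let inner := beta c (j :: rest')
          if cs.length = 2 then
            (if i = 0 then eprod inner ((cs[1]?.map FT.label).getD lbl)
             else eprod ((cs[0]?.map FT.label).getD lbl) inner)
          else
            if i = 0 then eprod inner (FT.label c)
            else if i = cs.length - 1 then eprod (FT.label c) inner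
            else eflat inner

/-! Only supports matter: `(p, x, q, M) ↦ {(i, j) | M i j ≠ -∞}` turns products into
relational composition. The root label then has the support of `M_B(w)`, so a pair `(i, j)`
witnessing `f_B(w) ≠ -∞` is a contributor of the root. Going down the tree, a contributor
`(i, j)` of a node whose matrix `M` has `M i j ≠ -∞` yields such a contributor of every child:
for a binary node `M = M₁ M₂` one splits through an intermediate state, and for an idempotent
node `M = M²` there is, by finiteness, a state `x` with `M i x`, `M x x`, `M x j` all `≠ -∞`,
which serves every child at once. -/

/-! ### The semiring `Ω` -/

-- `Ω` as a commutative semiring: `OSR.sup` is its addition and `OSR.add` its multiplication,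
-- so `(0 : OSR)` is `OSR.bot` and `(1 : OSR)` is `OSR.zero`.
instance : Zero OSR := ⟨.bot⟩
instance : One OSR := ⟨.zero⟩
instance : Add OSR := ⟨OSR.sup⟩
instance : Mul OSR := ⟨OSR.add⟩

instance : CommSemiring OSR where
  add_assoc a b c := by cases a <;> cases b <;> cases c <;> rfl
  add_comm a b := by cases a <;> cases b <;> rfl
  zero_add a := by cases a <;> rfl
  add_zero a := by cases a <;> rfl
  mul_assoc a b c := by cases a <;> cases b <;> cases c <;> rfl
  one_mul a := by cases a <;> rfl
  mul_one a := by cases a <;> rfl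
  left_distrib a b c := by cases a <;> cases b <;> cases c <;> rfl
  right_distrib a b c := by cases a <;> cases b <;> cases c <;> rfl
  zero_mul a := by cases a <;> rfl
  mul_zero a := by cases a <;> rfl
  mul_comm a b := by cases a <;> cases b <;> rfl
  nsmul := nsmulRec
  npow := npowRec

namespace OSR

instance : NoZeroDivisors OSR where
  eq_zero_or_eq_zero_of_mul_eq_zero {a b} := by cases a <;> cases b <;> decide

theorem add_eq_zero_iff {a b : OSR} : a + b = 0 ↔ a = 0 ∧ b = 0 := by
  cases a <;> cases b <;> decide

theorem sum_ne_zero_iff {ι : Type*} (s : Finset ι) (f : ι → OSR) :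
    ∑ j ∈ s, f j ≠ 0 ↔ ∃ j ∈ s, f j ≠ 0 := by
  classical
  induction s using Finset.induction_on with
  | empty => simp
  | insert a s ha ih =>
    rw [Finset.sum_insert ha, Finset.exists_mem_insert, ← ih, ne_eq, add_eq_zero_iff, not_and_or]

theorem matrix_mul_apply_ne_zero_iff {l m o : Type*} [Fintype m] (M : Matrix l m OSR)
    (N : Matrix m o OSR) (i : l) (k : o) :
    (M * N) i k ≠ 0 ↔ ∃ j, M i j ≠ 0 ∧ N j k ≠ 0 := by
  simp [Matrix.mul_apply, sum_ne_zero_iff]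

theorem matrix_one_apply_ne_zero_iff {ι : Type*} [DecidableEq ι] (i j : ι) :
    (1 : Matrix ι ι OSR) i j ≠ 0 ↔ i = j := by
  by_cases h : i = j <;> simp [Matrix.one_apply, h]

theorem osum_eq_sum {n : ℕ} (f : Fin n → OSR) : osum f = ∑ j, f j := by
  rw [Fin.sum_univ_def, List.sum_eq_foldr, List.foldr_map]
  rfl

end OSR

theorem Matrix.of_omul {n : ℕ} (M N : Fin n → Fin n → OSR) :
    Matrix.of (omul M N) = Matrix.of M * Matrix.of N := by
  ext i k
  exact OSR.osum_eq_sum _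

theorem barW_ne_zero_iff (x : WithBot ℕ) : barW x ≠ 0 ↔ x ≠ ⊥ := by
  induction x using WithBot.recBotCoe with
  | bot => exact iff_of_false (fun h => h rfl) (fun h => h rfl)
  | coe n =>
    simp only [barW, WithBot.recBotCoe_coe, ne_eq, WithBot.coe_ne_bot, not_false_eq_true,
      iff_true]
    split <;> decide

/-! ### Supports of products -/

namespace Elem

variable {QA : Type} {n : ℕ}

def mat (e : Elem QA n) : Matrix (Fin n) (Fin n) OSR := Matrix.of e.M

theorem mat_eprod (e f : Elem QA n) : (eprod e f).mat = e.mat * f.mat :=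
  Matrix.of_omul e.M f.M

theorem mat_foldl_eprod (l : List (Elem QA n)) (e : Elem QA n) :
    (l.foldl eprod e).mat = ((e :: l).map mat).prod := by
  induction l generalizing e with
  | nil => simp
  | cons f l ih => simp [ih, mat_eprod, mul_assoc]

end Elem

namespace FT

variable {QA : Type} {n : ℕ}

theorem leavesList_eq_flatten (cs : List (FT QA n)) : leavesList cs = (cs.map leaves).flatten := by
  induction cs with
  | nil => rfl
  | cons c cs ih => simp [leavesList, ih]

theorem WF.mat_label {t : FT QA n} (hwf : t.WF) : t.label.mat = (t.leaves.map Elem.mat).prod := by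
  induction hwf with
  | leaf e => simp [label, leaves]
  | node lbl cs hlen _ _ hprod _ ih =>
    obtain ⟨c, cs', rfl⟩ := List.exists_cons_of_length_pos (by omega : 0 < cs.length)
    rw [label, hprod _ _ rfl, Elem.mat_foldl_eprod, leaves, leavesList_eq_flatten,
      List.map_flatten, List.prod_flatten, ← List.map_cons]
    simp only [List.map_map]
    exact congrArg List.prod (List.map_congr_left ih)

end FT

namespace MPA

variable {Sigma Q : Type} [Fintype Q] [DecidableEq Q]

theorem mword_nil_ne_bot_iff (B : MPA Sigma Q) (i j : Q) :
    B.mword [] i j ≠ ⊥ ↔ i = j := by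
  by_cases h : i = j <;> simp [mword, h]

theorem mword_cons_ne_bot_iff (B : MPA Sigma Q) (a : Sigma) (w : List Sigma) (i j : Q) :
    B.mword (a :: w) i j ≠ ⊥ ↔ ∃ r, B.M a i r ≠ ⊥ ∧ B.mword w r j ≠ ⊥ := by
  simp [mword, Finset.sup_eq_bot_iff, WithBot.add_eq_bot, not_or]

theorem exists_of_func_ne_bot (B : MPA Sigma Q) {w : List Sigma} (hB : B.func w ≠ ⊥) :
    ∃ i j, B.I i ≠ ⊥ ∧ B.mword w i j ≠ ⊥ ∧ B.F j ≠ ⊥ := by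
  simpa [func, Finset.sup_eq_bot_iff, WithBot.add_eq_bot, not_or, and_assoc] using hB

end MPA

theorem PathLeaves.prod_mat_ne_zero_iff {Sigma QA : Type} {n : ℕ} {A : MPA Sigma QA}
    {B : MPA Sigma (Fin n)} {p q : QA} {w : List Sigma} {xs : List ℕ} {ls : List (Elem QA n)}
    (h : PathLeaves A B p w xs ls q) (i j : Fin n) :
    (ls.map Elem.mat).prod i j ≠ 0 ↔ B.mword w i j ≠ ⊥ := by
  induction w generalizing p xs ls i with
  | nil =>
    match xs, ls, h with
    | [], [], _ => simp [OSR.matrix_one_apply_ne_zero_iff, MPA.mword_nil_ne_bot_iff]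
  | cons a w ih =>
    match xs, ls, h with
    | _ :: _, e :: _, ⟨_, _, _, he, hrest⟩ =>
      simp only [List.map_cons, List.prod_cons, OSR.matrix_mul_apply_ne_zero_iff,
        MPA.mword_cons_ne_bot_iff, ih hrest]
      simp [Elem.mat, he, barW_ne_zero_iff]

/-! ### Idempotent supports -/

-- If there were no such loop, `R` would be a well-founded strict order on the finite set of
-- states between `a` and `b`, contradicting that each of them has an `R`-predecessor there.
theorem exists_loop_between_of_trans_of_dense {α : Type*} [Finite α] {R : α → α → Prop}
    (htrans : ∀ x y z, R x y → R y z → R x z) (hdense : ∀ x z, R x z → ∃ y, R x y ∧ R y z)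
    {a b : α} (hab : R a b) : ∃ x, R a x ∧ R x x ∧ R x b := by
  by_contra! hloop
  let between : α → Prop := fun x => R a x ∧ R x b
  let r : α → α → Prop := fun y x => R y x ∧ between y
  have : IsTrans α r := ⟨fun x y z hxy hyz => ⟨htrans _ _ _ hxy.1 hyz.1, hxy.2⟩⟩
  have : Std.Irrefl r := ⟨fun x hx => hloop x hx.2.1 hx.1 hx.2.2⟩
  obtain ⟨x₀, hax₀, hx₀b⟩ := hdense a b hab
  obtain ⟨m, ⟨ham, hmb⟩, hmin⟩ :=
    (Finite.wellFounded_of_trans_of_irrefl r).has_min {x | between x} ⟨x₀, hax₀, hx₀b⟩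
  obtain ⟨y, hay, hym⟩ := hdense a m ham
  exact hmin y ⟨hay, htrans _ _ _ hym hmb⟩ ⟨hym, hay, htrans _ _ _ hym hmb⟩

theorem OSR.exists_loop_of_mul_self {ι : Type*} [Fintype ι] {M : Matrix ι ι OSR} (hM : M * M = M)
    {a b : ι} (hab : M a b ≠ 0) : ∃ x, M a x ≠ 0 ∧ M x x ≠ 0 ∧ M x b ≠ 0 := by
  have hsupp : ∀ i k, M i k ≠ 0 ↔ ∃ j, M i j ≠ 0 ∧ M j k ≠ 0 := fun i k => by
    rw [← matrix_mul_apply_ne_zero_iff, hM]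
  exact exists_loop_between_of_trans_of_dense (fun x y z hxy hyz => (hsupp x z).2 ⟨y, hxy, hyz⟩)
    (fun x z => (hsupp x z).1) hab

/-! ### Contributors -/

namespace FT

variable {QA : Type} {n : ℕ}

theorem exists_mem_contribStep_pair {c₁ c₂ : FT QA n} {C : Set (Fin n × Fin n)}
    (hC : ∃ ij ∈ C, (eprod c₁.label c₂.label).mat ij.1 ij.2 ≠ 0) :
    (∃ ij ∈ contribStep [c₁, c₂] C 0, c₁.label.mat ij.1 ij.2 ≠ 0) ∧
      ∃ ij ∈ contribStep [c₁, c₂] C 1, c₂.label.mat ij.1 ij.2 ≠ 0 := by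
  obtain ⟨⟨a, b⟩, hab, hne⟩ := hC
  rw [Elem.mat_eprod, OSR.matrix_mul_apply_ne_zero_iff] at hne
  obtain ⟨ℓ, haℓ, hℓb⟩ := hne
  exact ⟨⟨(a, ℓ), ⟨b, hab, hℓb, haℓ⟩, haℓ⟩, ⟨(ℓ, b), ⟨a, hab, haℓ, hℓb⟩, hℓb⟩⟩

theorem exists_mem_contribStep_of_idempotent {cs : List (FT QA n)} (hlen : 3 ≤ cs.length)
    {e : Elem QA n} (hcs : ∀ c ∈ cs, c.label = e) (he : eprod e e = e)
    {C : Set (Fin n × Fin n)} (hC : ∃ ij ∈ C, e.mat ij.1 ij.2 ≠ 0) (i : ℕ) :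
    ∃ ij ∈ contribStep cs C i, e.mat ij.1 ij.2 ≠ 0 := by
  obtain ⟨⟨a, b⟩, hab, hne⟩ := hC
  obtain ⟨x, hax, hxx, hxb⟩ :=
    OSR.exists_loop_of_mul_self (by rw [← Elem.mat_eprod, he]) hne
  match cs, hlen with
  | c :: _ :: _ :: _, _ =>
    simp only [contribStep, hcs c List.mem_cons_self]
    split_ifs
    · exact ⟨(a, x), ⟨b, hab, hxb, hax⟩, hax⟩
    · exact ⟨(x, b), ⟨a, hab, hax, hxb⟩, hxb⟩
    · exact ⟨(x, x), ⟨a, b, hab, hax, hxb, hxx, hxx⟩, hxx⟩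

theorem WF.exists_mem_contribStep {lbl : Elem QA n} {cs : List (FT QA n)}
    (hwf : (FT.node lbl cs).WF) {C : Set (Fin n × Fin n)} (hC : ∃ ij ∈ C, lbl.mat ij.1 ij.2 ≠ 0)
    {i : ℕ} {c : FT QA n} (hc : cs[i]? = some c) :
    ∃ ij ∈ contribStep cs C i, c.label.mat ij.1 ij.2 ≠ 0 := by
  obtain _ | ⟨_, _, hlen, -, -, hprod, hidem⟩ := hwf
  match cs, hlen, i, hc with
  | [c₁, c₂], _, 0, rfl =>
    obtain rfl : lbl = eprod c₁.label c₂.label := hprod _ _ rfl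
    exact (exists_mem_contribStep_pair hC).1
  | [c₁, c₂], _, 1, rfl =>
    obtain rfl : lbl = eprod c₁.label c₂.label := hprod _ _ rfl
    exact (exists_mem_contribStep_pair hC).2
  | cs@(_ :: _ :: _ :: _), _, i, hc =>
    obtain ⟨-, he, hcs⟩ := hidem (by simp)
    rw [hcs c (List.mem_of_getElem? hc)]
    exact exists_mem_contribStep_of_idempotent (by simp) hcs he hC i

theorem WF.exists_mem_contribAt {t : FT QA n} (hwf : t.WF) {C : Set (Fin n × Fin n)}
    (hC : ∃ ij ∈ C, t.label.mat ij.1 ij.2 ≠ 0) {π : List ℕ} {c : FT QA n}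
    (hc : t.subtreeAt π = some c) : ∃ ij ∈ contribAt t C π, c.label.mat ij.1 ij.2 ≠ 0 := by
  induction π generalizing t C with
  | nil =>
    cases hc
    cases c <;> exact hC
  | cons i π ih =>
    cases t with
    | leaf e => simp [subtreeAt, childAt] at hc
    | node lbl cs =>
      obtain ⟨d, hd : cs[i]? = some d, hdc⟩ := Option.bind_eq_some_iff.mp hc
      have hwfd : d.WF := by
        obtain _ | ⟨_, _, -, hwfcs, -⟩ := hwf
        exact hwfcs d (List.mem_of_getElem? hd)
      simp only [contribAt, hd]
      exact ih hwfd (hwf.exists_mem_contribStep hC hd) hdc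

end FT

/-- if `f_A(w) ≠ -∞` and `f_B(w) ≠ -∞`, every node of any factorisation tree
on `w` has a non-empty set of contributors. -/
theorem contributors_nonempty {Sigma QA : Type} [Fintype Sigma] [Fintype QA] [DecidableEq QA]
    {nB : ℕ} (A : MPA Sigma QA) (B : MPA Sigma (Fin nB)) (hdet : A.Deterministic)
    (w : List Sigma) (hA : A.func w ≠ ⊥) (hB : B.func w ≠ ⊥)
    (t : FT QA nB) (ht : IsFactTreeOn A B w t) :
    ∀ (π : List ℕ) (c : FT QA nB), FT.subtreeAt t π = some c →
      (contributors B t π).Nonempty := by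
  intro π c hc
  obtain ⟨hwf, p, q, xs, -, -, hpath⟩ := ht
  obtain ⟨i, j, hi, hij, hj⟩ := B.exists_of_func_ne_bot hB
  have hroot : t.label.mat i j ≠ 0 := by
    rwa [hwf.mat_label, hpath.prod_mat_ne_zero_iff]
  obtain ⟨ij, hmem, -⟩ :=
    hwf.exists_mem_contribAt (C := rootContrib B t) ⟨(i, j), ⟨hi, hj, hroot⟩, hroot⟩ hc
  exact ⟨ij, hmem⟩
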